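/- arXiv:1605.09733 — 2 statements merged into one kernel-verified Lean document; each statement's English description precedes it below -/
import Mathlib

section
/- No Copeland rule on n players (n ≥ 3 odd) is 2-SNM-α for α < 1 − 2/n. -/
abbrev Tournament (n : ℕ) := Fin n → Fin n → Bool

def IsTournament {n : ℕ} (T : Tournament n) : Prop :=
  (∀ i, T i i = false) ∧ ∀ i j : Fin n, i ≠ j → T i j = !T j i

def CondorcetWinner {n : ℕ} (T : Tournament n) (i : Fin n) : Prop :=
  ∀ j, j ≠ i → T i j = true

def PairAdjacent {n : ℕ} (i j : Fin n) (T T' : Tournament n) : Prop :=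
  ∀ a b : Fin n, ¬((a = i ∧ b = j) ∨ (a = j ∧ b = i)) → T a b = T' a b

def SAdjacent {n : ℕ} (S : Finset (Fin n)) (T T' : Tournament n) : Prop :=
  ∀ a b : Fin n, (a ∉ S ∨ b ∉ S) → T a b = T' a b

def IsRule {n : ℕ} (r : Tournament n → Fin n → ℝ) : Prop :=
  ∀ T, IsTournament T → (∀ i, 0 ≤ r T i) ∧ (∑ i, r T i) = 1

def CondorcetConsistent {n : ℕ} (r : Tournament n → Fin n → ℝ) : Prop :=
  ∀ T, IsTournament T → ∀ i, CondorcetWinner T i → r T i = 1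

def SNM2 {n : ℕ} (r : Tournament n → Fin n → ℝ) (α : ℝ) : Prop :=
  ∀ T T' : Tournament n, IsTournament T → IsTournament T' →
    ∀ i j : Fin n, i ≠ j → PairAdjacent i j T T' →
      r T' i + r T' j - r T i - r T j ≤ α

def SNMk {n : ℕ} (k : ℕ) (r : Tournament n → Fin n → ℝ) (α : ℝ) : Prop :=
  ∀ S : Finset (Fin n), S.card ≤ k → ∀ T T' : Tournament n,
    IsTournament T → IsTournament T' → SAdjacent S T T' →
      (∑ i ∈ S, r T' i) - (∑ i ∈ S, r T i) ≤ α

def flipTo {n : ℕ} (i j : Fin n) (T : Tournament n) : Tournament n :=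
  fun a b => if a = i ∧ b = j then true else if a = j ∧ b = i then false else T a b

def winCount {n : ℕ} (T : Tournament n) (i : Fin n) : ℕ :=
  (Finset.univ.filter fun j => T i j = true).card

def cyclicT (m w : ℕ) : Tournament m :=
  fun i j => decide (1 ≤ (j.val + m - i.val) % m ∧ (j.val + m - i.val) % m ≤ w)

def skT (n : ℕ) : Tournament n :=
  fun i j =>
    if i.val = n - 1 ∧ j.val = 0 then true
    else if i.val = 0 ∧ j.val = n - 1 then false
    else decide (i.val < j.val)

def CopelandRule {n : ℕ} (r : Tournament n → Fin n → ℝ) : Prop :=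
  ∀ T, IsTournament T → ∀ i, r T i ≠ 0 → ∀ j, winCount T j ≤ winCount T i

lemma mod_small {n a : ℕ} (h : a < 2*n) : a % n = if a < n then a else a - n := by
  split_ifs with h'
  · exact Nat.mod_eq_of_lt h'
  · rw [Nat.mod_eq_sub_mod (le_of_not_gt h'), Nat.mod_eq_of_lt (by omega)]

lemma cyclic_isT {n k : ℕ} (hk : n = 2*k+1) : IsTournament (cyclicT n k) := by
  constructor
  · intro i
    have hi := i.isLt
    have : (i.val + n - i.val) % n = 0 := by
      have : i.val + n - i.val = n := by omega
      simp [this]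
    simp [cyclicT, this]
  · intro i j hij
    have hi := i.isLt
    have hj := j.isLt
    have hij' : i.val ≠ j.val := fun h => hij (Fin.ext h)
    simp only [cyclicT]
    rw [← decide_not, decide_eq_decide]
    rw [mod_small (by omega), mod_small (by omega)]
    split_ifs <;> omega

lemma flip_isT {n : ℕ} (i j : Fin n) (hij : i ≠ j) (T) (hT : IsTournament T) :
    IsTournament (flipTo i j T) := by
  obtain ⟨h1, h2⟩ := hT
  constructor
  · intro a
    simp only [flipTo]
    split_ifs with c1 c2
    · exact absurd (c1.1.symm.trans c1.2) hij
    · exact absurd (c2.1.symm.trans c2.2) (Ne.symm hij)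
    · exact h1 a
  · intro a b hab
    simp only [flipTo]
    split_ifs <;> simp_all

lemma winCount_cyclic {n k : ℕ} (hk : n = 2*k+1) (i : Fin n) :
    winCount (cyclicT n k) i = k := by
  have hi := i.isLt
  have h1 : winCount (cyclicT n k) i
      = ((Finset.range n).filter fun m => 1 ≤ m ∧ m ≤ k).card := by
    apply Finset.card_bij (fun j _ => (j.val + n - i.val) % n)
    · intro j hj
      simp only [Finset.mem_filter, Finset.mem_univ, true_and, cyclicT,
        decide_eq_true_eq] at hj
      simp only [Finset.mem_filter, Finset.mem_range]
      exact ⟨Nat.mod_lt _ (by omega), hj⟩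
    · intro a ha b hb hab
      have hav := a.isLt; have hbv := b.isLt
      rw [mod_small (by omega), mod_small (by omega)] at hab
      apply Fin.ext
      split_ifs at hab <;> omega
    · intro m hm
      simp only [Finset.mem_filter, Finset.mem_range] at hm
      refine ⟨⟨(m + i.val) % n, Nat.mod_lt _ (by omega)⟩, ?_, ?_⟩
      · simp only [Finset.mem_filter, Finset.mem_univ, true_and, cyclicT,
          decide_eq_true_eq]
        rw [mod_small (a := m + i.val) (by omega)]
        split_ifs with h
        · rw [mod_small (by omega)]; split_ifs <;> omega
        · rw [mod_small (by omega)]; split_ifs <;> omega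
      · simp only
        rw [mod_small (a := m + i.val) (by omega)]
        split_ifs with h
        · rw [mod_small (by omega)]; split_ifs <;> omega
        · rw [mod_small (by omega)]; split_ifs <;> omega
  rw [h1]
  have : ((Finset.range n).filter fun m => 1 ≤ m ∧ m ≤ k) = Finset.Ico 1 (k+1) := by
    ext m
    simp only [Finset.mem_filter, Finset.mem_range, Finset.mem_Ico]
    omega
  rw [this, Nat.card_Ico]
  omega

lemma winCount_flip_winner {n : ℕ} (i j : Fin n) (hij : i ≠ j) (T)
    (hT : T i j = false) : winCount (flipTo i j T) i = winCount T i + 1 := by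
  have : (Finset.univ.filter fun b => flipTo i j T i b = true)
      = insert j (Finset.univ.filter fun b => T i b = true) := by
    ext b
    simp only [Finset.mem_filter, Finset.mem_univ, true_and, Finset.mem_insert, flipTo]
    rcases eq_or_ne b j with rfl | hbj
    · simp
    · simp [hbj, fun h : i = j => hij h]
  rw [winCount, this, Finset.card_insert_of_notMem (by simp [hT]), winCount]

lemma winCount_flip_loser {n : ℕ} (i j : Fin n) (hij : i ≠ j) (T)
    (hT : T j i = true) : winCount (flipTo i j T) j = winCount T j - 1 := by
  have : (Finset.univ.filter fun b => flipTo i j T j b = true)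
      = (Finset.univ.filter fun b => T j b = true).erase i := by
    ext b
    simp only [Finset.mem_filter, Finset.mem_univ, true_and, Finset.mem_erase]
    unfold flipTo
    split_ifs with c1 c2 <;> simp_all
  rw [winCount, this, Finset.card_erase_of_mem (by simp [hT]), winCount]

lemma winCount_flip_other {n : ℕ} (i j a : Fin n) (hai : a ≠ i) (haj : a ≠ j) (T) :
    winCount (flipTo i j T) a = winCount T a := by
  unfold winCount
  congr 1
  apply Finset.filter_congr
  intro b _
  simp [flipTo, hai, haj]

/-- No Copeland rule on n players (n ≥ 3 odd) is 2-SNM-α for α < 1 - 2/n. -/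
theorem stmt_5 (n : ℕ) (hn : 3 ≤ n) (hodd : Odd n)
    (r : Tournament n → Fin n → ℝ) (α : ℝ)
    (hr : IsRule r) (hcop : CopelandRule r) (hsnm : SNM2 r α) :
    1 - 2/(n:ℝ) ≤ α := by
  have : NeZero n := ⟨by omega⟩
  obtain ⟨k, hk⟩ := hodd
  have hk1 : 1 ≤ k := by omega
  set T := cyclicT n k with hT
  have hTt : IsTournament T := cyclic_isT hk
  -- pigeonhole: some consecutive pair has small total probability
  have hsum2 : ∑ i : Fin n, (r T i + r T (i + 1)) = 2 := by
    rw [Finset.sum_add_distrib, (hr T hTt).2]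
    have : ∑ i : Fin n, r T (i + 1) = ∑ i : Fin n, r T i :=
      Fintype.sum_equiv (Equiv.addRight 1) _ _ (fun i => rfl)
    rw [this, (hr T hTt).2]; norm_num
  have hex : ∃ i : Fin n, r T i + r T (i + 1) ≤ 2 / n := by
    by_contra h
    push_neg at h
    have := Finset.sum_lt_sum_of_nonempty (s := (Finset.univ : Finset (Fin n)))
      (f := fun _ => (2:ℝ)/n) (g := fun i => r T i + r T (i+1))
      ⟨0, Finset.mem_univ 0⟩ (fun i _ => h i)
    rw [hsum2, Finset.sum_const, Finset.card_univ, Fintype.card_fin] at this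
    have hn' : (0:ℝ) < n := by positivity
    rw [nsmul_eq_mul, mul_div_cancel₀ _ (ne_of_gt hn')] at this
    linarith
  obtain ⟨i, hi⟩ := hex
  set i' := i + 1 with hi'
  have hval : i'.val = (i.val + 1) % n := by
    rw [hi', Fin.val_add, Fin.val_one']
    rw [Nat.mod_eq_of_lt (show 1 < n by omega)]
  have hne : i' ≠ i := by
    intro h
    have h2 := congrArg Fin.val h
    have hiv := i.isLt
    rw [hval, mod_small (by omega)] at h2
    split_ifs at h2 <;> omega
  -- the flipped tournament
  set T' := flipTo i' i T with hT'
  have hTt' : IsTournament T' := flip_isT i' i hne T hTt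
  -- T i i' = true and T i' i = false
  have hd : (i'.val + n - i.val) % n = 1 := by
    have hiv := i.isLt
    rw [hval, mod_small (a := i.val + 1) (by omega)]
    split_ifs with h
    · rw [mod_small (by omega)]; split_ifs <;> omega
    · rw [mod_small (by omega)]; split_ifs <;> omega
  have hTii' : T i i' = true := by
    simp only [hT, cyclicT, hd, decide_eq_true_eq]
    omega
  have hTi'i : T i' i = false := by
    have := hTt.2 i' i hne
    rw [this, hTii']
    rfl
  -- winCounts in T'
  have hwin' : winCount T' i' = k + 1 := by
    rw [hT', winCount_flip_winner i' i hne T hTi'i, winCount_cyclic hk]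
  have hmax : ∀ j, j ≠ i' → winCount T' j < winCount T' i' := by
    intro j hj
    rw [hwin']
    rcases eq_or_ne j i with rfl | hji
    · rw [hT', winCount_flip_loser i' j hne T hTii', winCount_cyclic hk]
      omega
    · rw [hT', winCount_flip_other i' i j hj hji T, winCount_cyclic hk]
      omega
  -- Copeland forces r T' j = 0 for j ≠ i'
  have hzero : ∀ j, j ≠ i' → r T' j = 0 := by
    intro j hj
    by_contra h
    exact absurd (hcop T' hTt' j h i') (not_le.mpr (hmax j hj))
  have hone : r T' i' = 1 := by
    have := (hr T' hTt').2
    rwa [Finset.sum_eq_single i' (fun j _ hj => hzero j hj) (by simp)] at this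
  -- apply SNM2
  have hadj : PairAdjacent i' i T T' := by
    intro a b hab
    simp only [hT', flipTo]
    rw [if_neg (fun h => hab (Or.inl h)), if_neg (fun h => hab (Or.inr h))]
  have := hsnm T T' hTt hTt' i' i hne hadj
  rw [hone, hzero i (Ne.symm hne)] at this
  linarith
end

section
/- The randomized voting caterpillar rule on n players is not 2-SNM-α for any α < 1/2 − (n−2)/(n(n−1)). -/
def catWinner {n : ℕ} (hn : 0 < n) (T : Tournament n) (π : Equiv.Perm (Fin n)) : Fin n :=
  (((List.finRange n).map π).drop 1).foldl
    (fun w x => if T w x = true then w else x) (π ⟨0, hn⟩)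

noncomputable def catRule (n : ℕ) (hn : 0 < n) : Tournament n → Fin n → ℝ :=
  fun T i =>
    ((Finset.univ.filter fun π : Equiv.Perm (Fin n) => catWinner hn T π = i).card : ℝ) /
      (Nat.factorial n)


/-! In the superman–kryptonite tournament `skT n`, player `0` beats everyone except `n - 1`, and
`n - 1` beats only `0`. A caterpillar champion beats every player entering after it and, unless it
entered first, some player entering before it. Hence `n - 1` can win only by entering last
(probability `1/n`), and `0` only by entering after `n - 1` without `n - 1, 0` opening the order
(probability `1/2 - 1/(n(n-1))`). Once `n - 1` throws its match against `0`, player `0` is a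
Condorcet winner and wins surely, so the pair gains at least `1/2 - (n-2)/(n(n-1))`. -/

open Finset

def catStep {n : ℕ} (T : Tournament n) (w x : Fin n) : Fin n :=
  if T w x = true then w else x

section Caterpillar

variable {n : ℕ} {T : Tournament n}

@[simp]
lemma catStep_self (w : Fin n) : catStep T w w = w := by
  simp [catStep]

lemma foldl_catStep_mem (w : Fin n) (l : List (Fin n)) : l.foldl (catStep T) w ∈ w :: l := by
  induction l generalizing w with
  | nil => simp
  | cons x l ih =>
    have hstep : catStep T w x = w ∨ catStep T w x = x := by
      unfold catStep; split <;> simp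
    rw [List.foldl_cons]
    rcases hstep with h | h <;> rw [h]
    · exact List.cons_subset_cons w (List.subset_cons_self x l) (ih w)
    · exact List.subset_cons_self w (x :: l) (ih x)

lemma foldl_catStep_eq_self {c : Fin n} {l : List (Fin n)}
    (h : ∀ y ∈ l, y ≠ c → T c y = true) : l.foldl (catStep T) c = c := by
  induction l with
  | nil => rfl
  | cons x l ih =>
    have hx : catStep T c x = c := by
      by_cases hxc : x = c
      · simp [hxc]
      · simp [catStep, h x List.mem_cons_self hxc]
    rw [List.foldl_cons, hx]
    exact ih fun y hy => h y (List.mem_cons_of_mem x hy)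

lemma beats_of_foldl_catStep_eq_self {c : Fin n} {l : List (Fin n)} (hc : c ∉ l)
    (h : l.foldl (catStep T) c = c) : ∀ y ∈ l, T c y = true := by
  induction l with
  | nil => simp
  | cons x l ih =>
    rw [List.mem_cons, not_or] at hc
    by_cases hcx : T c x = true
    · rw [List.foldl_cons, catStep, if_pos hcx] at h
      simpa [hcx] using ih hc.2 h
    · rw [List.foldl_cons, catStep, if_neg hcx] at h
      have := h ▸ foldl_catStep_mem (T := T) x l
      simp [hc.1, hc.2] at this

lemma foldl_catStep_append_cons {w c : Fin n} {A B : List (Fin n)} (hc : c ∉ B)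
    (h : (A ++ c :: B).foldl (catStep T) w = c) :
    catStep T (A.foldl (catStep T) w) c = c ∧ ∀ y ∈ B, T c y = true := by
  rw [List.foldl_append, List.foldl_cons] at h
  have hentry : catStep T (A.foldl (catStep T) w) c = c := by
    have := h ▸ foldl_catStep_mem (T := T) (catStep T (A.foldl (catStep T) w) c) B
    simpa [hc, eq_comm] using this
  rw [hentry] at h
  exact ⟨hentry, beats_of_foldl_catStep_eq_self hc h⟩

end Caterpillar

section Positions

variable {n : ℕ} (π : Equiv.Perm (Fin n))

lemma mem_drop_map_finRange_iff {k : ℕ} {y : Fin n} :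
    y ∈ ((List.finRange n).map π).drop k ↔ k ≤ (π.symm y).val := by
  rw [List.mem_drop_iff_getElem]
  constructor
  · rintro ⟨j, hj, rfl⟩
    simp
  · intro h
    refine ⟨(π.symm y).val - k, ?_, ?_⟩
    · simp only [List.length_map, List.length_finRange]
      omega
    simp [Nat.add_sub_cancel' h]

lemma mem_take_map_finRange_iff {k : ℕ} {y : Fin n} :
    y ∈ ((List.finRange n).map π).take k ↔ (π.symm y).val < k := by
  rw [List.mem_take_iff_getElem]
  constructor
  · rintro ⟨j, hj, rfl⟩
    simp only [List.length_map, List.length_finRange, lt_inf_iff, List.getElem_map,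
      List.getElem_finRange, Fin.cast_mk, Equiv.symm_apply_apply] at hj ⊢
    exact hj.1
  · intro h
    refine ⟨(π.symm y).val, ?_, by simp⟩
    simp only [List.length_map, List.length_finRange]
    omega

lemma map_finRange_eq_take_append_cons_drop (c : Fin n) :
    (List.finRange n).map π =
      ((List.finRange n).map π).take (π.symm c) ++
        c :: ((List.finRange n).map π).drop (π.symm c + 1) := by
  have hlt : (π.symm c).val < ((List.finRange n).map π).length := by simp
  conv_lhs => rw [← List.take_append_drop (π.symm c) ((List.finRange n).map π)]
  rw [List.drop_eq_getElem_cons hlt]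
  simp

end Positions

section Winner

variable {n : ℕ} (hn : 0 < n) {T : Tournament n} {π : Equiv.Perm (Fin n)} {c : Fin n}

lemma catWinner_eq_foldl (T : Tournament n) (π : Equiv.Perm (Fin n)) :
    catWinner hn T π = ((List.finRange n).map π).foldl (catStep T) (π ⟨0, hn⟩) := by
  have hlt : 0 < ((List.finRange n).map π).length := by simpa using hn
  conv_rhs => rw [← List.drop_zero (l := (List.finRange n).map π), List.drop_eq_getElem_cons hlt]
  simp only [List.foldl_cons, List.getElem_map, List.getElem_finRange, Fin.cast_mk, catStep_self]
  rfl

lemma catWinner_eq_of_condorcetWinner (hT : IsTournament T) (hc : CondorcetWinner T c)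
    (π : Equiv.Perm (Fin n)) : catWinner hn T π = c := by
  rw [catWinner_eq_foldl, map_finRange_eq_take_append_cons_drop π c, List.foldl_append,
    List.foldl_cons]
  have hentry : ∀ d, catStep T d c = c := fun d => by
    by_cases hdc : d = c
    · simp [hdc]
    · simp [catStep, hT.2 d c hdc, hc d hdc]
  rw [hentry]
  exact foldl_catStep_eq_self fun y _ hy => hc y hy

lemma catRule_eq_one_of_condorcetWinner (hT : IsTournament T) (hc : CondorcetWinner T c) :
    catRule n hn T c = 1 := by
  have hfact : (n.factorial : ℝ) ≠ 0 := by positivity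
  simp [catRule, catWinner_eq_of_condorcetWinner hn hT hc, Fintype.card_perm, hfact]

lemma catRule_nonneg (T : Tournament n) (i : Fin n) : 0 ≤ catRule n hn T i := by
  unfold catRule
  positivity

lemma catWinner_spec (h : catWinner hn T π = c) :
    catStep T ((((List.finRange n).map π).take (π.symm c)).foldl (catStep T) (π ⟨0, hn⟩)) c =
        c ∧
      ∀ y, π.symm c < π.symm y → T c y = true := by
  rw [catWinner_eq_foldl, map_finRange_eq_take_append_cons_drop π c] at h
  have hc : c ∉ ((List.finRange n).map π).drop (π.symm c + 1) := by
    simp [mem_drop_map_finRange_iff]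
  refine ⟨(foldl_catStep_append_cons hc h).1, fun y hy => ?_⟩
  exact (foldl_catStep_append_cons hc h).2 y
    ((mem_drop_map_finRange_iff π).2 (Fin.lt_def.1 hy))

lemma catWinner_beats_of_lt (h : catWinner hn T π = c) {y : Fin n} (hy : π.symm c < π.symm y) :
    T c y = true :=
  (catWinner_spec hn h).2 y hy

lemma exists_catWinner_beats_of_pos (hT : IsTournament T) (h : catWinner hn T π = c)
    (hpos : 0 < (π.symm c).val) : ∃ d, π.symm d < π.symm c ∧ T c d = true := by
  have hd : (((List.finRange n).map π).take (π.symm c)).foldl (catStep T) (π ⟨0, hn⟩) ∈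
      ((List.finRange n).map π).take (π.symm c) := by
    have hfirst : π ⟨0, hn⟩ ∈ ((List.finRange n).map π).take (π.symm c) := by
      simpa [mem_take_map_finRange_iff] using hpos
    rcases List.mem_cons.1 (foldl_catStep_mem (T := T) (π ⟨0, hn⟩)
      (((List.finRange n).map π).take (π.symm c))) with hd | hd
    · rw [hd]; exact hfirst
    · exact hd
  set d := (((List.finRange n).map π).take (π.symm c)).foldl (catStep T) (π ⟨0, hn⟩)
  have hdlt : π.symm d < π.symm c := (mem_take_map_finRange_iff π).1 hd
  have hdc : d ≠ c := fun hdc => lt_irrefl _ (hdc ▸ hdlt)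
  have hlost : T d c = false := by
    by_contra hwin
    have := (catWinner_spec hn h).1
    rw [catStep, if_pos (by simpa using hwin)] at this
    exact hdc this
  exact ⟨d, hdlt, by simpa [hlost] using hT.2 c d hdc.symm⟩

lemma catRule_le_card_div {S : Finset (Equiv.Perm (Fin n))} {i : Fin n}
    (h : ∀ π, catWinner hn T π = i → π ∈ S) : catRule n hn T i ≤ #S / n.factorial := by
  unfold catRule
  gcongr
  intro π
  simpa using h π

end Winner

lemma exists_perm_apply_eq_apply_eq {α : Type*} [DecidableEq α] {a a' b b' : α} (ha : a ≠ a')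
    (hb : b ≠ b') : ∃ g : Equiv.Perm α, g a = b ∧ g a' = b' := by
  set c := Equiv.swap a b a'
  have hcb : c ≠ b := fun h =>
    ha ((Equiv.swap a b).injective (h.trans (Equiv.swap_apply_left a b).symm)).symm
  refine ⟨Equiv.swap c b' * Equiv.swap a b, ?_, ?_⟩
  · simp [Equiv.swap_apply_of_ne_of_ne hcb.symm hb]
  · simp [c]

section PermCount

variable {α : Type*} [Fintype α] [DecidableEq α]

lemma card_filter_perm_mul_left (g : Equiv.Perm α) (p : Equiv.Perm α → Prop) [DecidablePred p] :
    #{σ | p (g * σ)} = #{σ | p σ} :=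
  Finset.card_equiv (Equiv.mulLeft g) (by simp)

lemma card_fiber_mul_card_eq_factorial {β : Type*} [DecidableEq β] (f : Equiv.Perm α → β)
    (s : Finset β) (b₀ : β) (hf : ∀ σ, f σ ∈ s)
    (hfib : ∀ b ∈ s, ∃ g : Equiv.Perm α, ∀ σ, f (g * σ) = b ↔ f σ = b₀) :
    #{σ | f σ = b₀} * #s = (Fintype.card α).factorial := by
  calc #{σ | f σ = b₀} * #s = ∑ b ∈ s, #{σ | f σ = b} := by
        rw [mul_comm, Finset.sum_const_nat fun b hb => ?_]
        obtain ⟨g, hg⟩ := hfib b hb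
        rw [← card_filter_perm_mul_left g]
        simp only [hg]
    _ = #(univ : Finset (Equiv.Perm α)) :=
        (Finset.card_eq_sum_card_fiberwise fun σ _ => hf σ).symm
    _ = (Fintype.card α).factorial := by rw [Finset.card_univ, Fintype.card_perm]

lemma card_filter_apply_eq_mul (a b : α) :
    #{σ : Equiv.Perm α | σ a = b} * Fintype.card α = (Fintype.card α).factorial :=
  card_fiber_mul_card_eq_factorial (fun σ => σ a) univ b (fun _ => mem_univ _)
    fun c _ => ⟨Equiv.swap b c, fun σ => by simp [Equiv.swap_apply_eq_iff]⟩

lemma card_filter_apply_eq_and_apply_eq_mul {a a' : α} (ha : a ≠ a') {b b' : α}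
    (hb : b ≠ b') :
    #{σ : Equiv.Perm α | σ a = b ∧ σ a' = b'} *
        (Fintype.card α * Fintype.card α - Fintype.card α) = (Fintype.card α).factorial := by
  have := card_fiber_mul_card_eq_factorial (fun σ => (σ a, σ a')) univ.offDiag (b, b')
    (fun σ => by simpa using σ.injective.ne ha) fun c hc => by
      obtain ⟨g, hgb, hgb'⟩ := exists_perm_apply_eq_apply_eq hb (Finset.mem_offDiag.1 hc).2.2
      refine ⟨g, fun σ => ?_⟩
      rw [Prod.ext_iff, Prod.ext_iff, ← hgb, ← hgb']
      simp only [Equiv.Perm.mul_apply, g.injective.eq_iff]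
  simpa [Finset.offDiag_card] using this

lemma card_filter_symm_lt_symm_mul_two [LinearOrder α] {a b : α} (hab : a ≠ b) :
    #{σ : Equiv.Perm α | σ.symm a < σ.symm b} * 2 = (Fintype.card α).factorial := by
  have hswap : #{σ : Equiv.Perm α | σ.symm a < σ.symm b} =
      #{σ : Equiv.Perm α | ¬σ.symm a < σ.symm b} := by
    rw [← card_filter_perm_mul_left (Equiv.swap a b)]
    congr 1
    refine Finset.filter_congr fun σ _ => ?_
    have hne : σ.symm a ≠ σ.symm b := σ.symm.injective.ne hab
    simpa [Equiv.Perm.mul_def] using hne.symm.le_iff_lt.symm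
  rw [← Fintype.card_perm, ← Finset.card_univ,
    ← Finset.card_filter_add_card_filter_not (s := univ)
      (fun σ : Equiv.Perm α => σ.symm a < σ.symm b)]
  omega

end PermCount

section Flip

variable {n : ℕ} {T : Tournament n} {i j : Fin n}

lemma flipTo_isTournament (hT : IsTournament T) (hij : i ≠ j) : IsTournament (flipTo i j T) := by
  refine ⟨fun a => ?_, fun a b hab => ?_⟩
  · have hi : ¬(a = i ∧ a = j) := fun h => hij (h.1 ▸ h.2)
    have hj : ¬(a = j ∧ a = i) := fun h => hij (h.2 ▸ h.1)
    rw [flipTo, if_neg hi, if_neg hj]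
    exact hT.1 a
  · have := hT.2 a b hab
    unfold flipTo
    split_ifs <;> simp_all

lemma pairAdjacent_flipTo : PairAdjacent i j T (flipTo i j T) := by
  intro a b hab
  rw [not_or] at hab
  simp [flipTo, hab.1, hab.2]

lemma condorcetWinner_flipTo (h : ∀ y, y ≠ i → y ≠ j → T i y = true) :
    CondorcetWinner (flipTo i j T) i := by
  intro y hy
  unfold flipTo
  split_ifs <;> simp_all

end Flip

lemma skT_eq_true_iff {n : ℕ} {i j : Fin n} :
    skT n i j = true ↔
      (i.val = n - 1 ∧ j.val = 0) ∨ (¬(i.val = 0 ∧ j.val = n - 1) ∧ i.val < j.val) := by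
  unfold skT
  split_ifs <;> simp_all

lemma skT_isTournament {n : ℕ} (hn : 2 ≤ n) : IsTournament (skT n) := by
  refine ⟨fun a => ?_, fun a b hab => ?_⟩
  · rw [← Bool.not_eq_true, skT_eq_true_iff]
    omega
  · have := Fin.val_ne_of_ne hab
    have := a.isLt
    have := b.isLt
    rw [Bool.eq_not_iff, Ne, Bool.eq_iff_iff, skT_eq_true_iff, skT_eq_true_iff]
    omega

section SupermanKryptonite

variable {k : ℕ}

lemma skT_zero_last : skT (k + 2) 0 (Fin.last (k + 1)) = false := by
  rw [← Bool.not_eq_true, skT_eq_true_iff]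
  simp

lemma skT_last_eq_true_iff {y : Fin (k + 2)} :
    skT (k + 2) (Fin.last (k + 1)) y = true ↔ y = 0 := by
  rw [skT_eq_true_iff, Fin.ext_iff, Fin.val_last, Fin.val_zero]
  omega

lemma skT_zero_eq_true {y : Fin (k + 2)} (h0 : y ≠ 0) (hlast : y ≠ Fin.last (k + 1)) :
    skT (k + 2) 0 y = true := by
  rw [Ne, Fin.ext_iff, Fin.val_zero] at h0
  rw [Ne, Fin.ext_iff, Fin.val_last] at hlast
  rw [skT_eq_true_iff, Fin.val_zero]
  omega

variable (hn : 0 < k + 3) {π : Equiv.Perm (Fin (k + 3))}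

lemma skT_catWinner_last (h : catWinner hn (skT (k + 3)) π = Fin.last (k + 2)) :
    π (Fin.last (k + 2)) = Fin.last (k + 2) := by
  obtain ⟨p, hp_def⟩ : ∃ p, π.symm (Fin.last (k + 2)) = p := ⟨_, rfl⟩
  rw [← Equiv.eq_symm_apply, hp_def]
  -- `n - 1` beats only `0`: two later entrants are impossible, and so is one later entrant
  -- together with an earlier victim.
  by_contra hp
  have hp' : p.val + 1 < k + 3 := by have := Fin.val_lt_last (Ne.symm hp); omega
  have beaten : ∀ y, p < π.symm y → y = 0 := fun y hy =>
    skT_last_eq_true_iff.1 (catWinner_beats_of_lt hn h (hp_def ▸ hy))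
  have hnext : π ⟨p + 1, hp'⟩ = 0 := beaten _ (by simp [Fin.lt_def])
  rcases Nat.eq_zero_or_pos p.val with h0 | hpos
  · have hthird := beaten (π ⟨2, by omega⟩) (by simp [Fin.lt_def, h0])
    have := π.injective (hnext.trans hthird.symm)
    simp [Fin.ext_iff, h0] at this
  · obtain ⟨d, hd, hbeat⟩ :=
      exists_catWinner_beats_of_pos hn (skT_isTournament (by omega)) h (hp_def ▸ hpos)
    rw [skT_last_eq_true_iff.1 hbeat, ← hnext, Equiv.symm_apply_apply, hp_def, Fin.lt_def] at hd
    exact absurd hd (by simp)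

lemma skT_catWinner_zero (h : catWinner hn (skT (k + 3)) π = 0) :
    π.symm (Fin.last (k + 2)) < π.symm 0 ∧ ¬(π 0 = Fin.last (k + 2) ∧ π 1 = 0) := by
  have hlost : skT (k + 3) 0 (Fin.last (k + 2)) = false := skT_zero_last
  refine ⟨lt_of_le_of_ne (not_lt.1 fun hlt => ?_) (π.symm.injective.ne (Fin.last_pos.ne')), ?_⟩
  · simp [catWinner_beats_of_lt hn h hlt] at hlost
  · rintro ⟨hfirst, hsecond⟩
    have hpos : π.symm 0 = 1 := by rw [← hsecond, Equiv.symm_apply_apply]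
    obtain ⟨d, hd, hbeat⟩ := exists_catWinner_beats_of_pos hn (skT_isTournament (by omega)) h
      (by simp [hpos])
    have : d = π 0 := by
      rw [hpos, Fin.lt_one_iff] at hd
      rw [← hd, Equiv.apply_symm_apply]
    rw [this, hfirst, hlost] at hbeat
    exact Bool.false_ne_true hbeat

lemma catRule_skT_last_le :
    catRule (k + 3) hn (skT (k + 3)) (Fin.last (k + 2)) ≤ 1 / ((k : ℝ) + 3) := by
  have hcard := card_filter_apply_eq_mul (Fin.last (k + 2)) (Fin.last (k + 2))
  rw [Fintype.card_fin] at hcard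
  calc catRule (k + 3) hn (skT (k + 3)) (Fin.last (k + 2))
      ≤ #{σ : Equiv.Perm (Fin (k + 3)) | σ (Fin.last (k + 2)) = Fin.last (k + 2)} /
          (k + 3).factorial :=
        catRule_le_card_div hn fun π h => by simpa using skT_catWinner_last hn h
    _ = 1 / ((k : ℝ) + 3) := by
        rw [div_eq_div_iff (by positivity) (by positivity), ← hcard]
        push_cast
        ring

lemma catRule_skT_zero_le :
    catRule (k + 3) hn (skT (k + 3)) 0 ≤ 1 / 2 - 1 / (((k : ℝ) + 3) * ((k : ℝ) + 2)) := by
  set A : Finset (Equiv.Perm (Fin (k + 3))) := {σ | σ.symm (Fin.last (k + 2)) < σ.symm 0}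
  set B : Finset (Equiv.Perm (Fin (k + 3))) := {σ | σ 0 = Fin.last (k + 2) ∧ σ 1 = 0}
  have hBA : B ⊆ A := fun σ hσ => by
    simp only [B, A, mem_filter, mem_univ, true_and] at hσ ⊢
    rw [← hσ.2, ← hσ.1, Equiv.symm_apply_apply, Equiv.symm_apply_apply]
    exact Fin.zero_lt_one
  have hA : (#A : ℝ) = (k + 3).factorial / 2 := by
    have := card_filter_symm_lt_symm_mul_two (Fin.last_pos.ne' : Fin.last (k + 2) ≠ 0)
    rw [Fintype.card_fin] at this
    rw [eq_div_iff two_ne_zero]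
    exact_mod_cast this
  have hB : (#B : ℝ) = (k + 3).factorial / (((k : ℝ) + 3) * ((k : ℝ) + 2)) := by
    have := card_filter_apply_eq_and_apply_eq_mul (Fin.zero_ne_one : (0 : Fin (k + 3)) ≠ 1)
      (Fin.last_pos.ne' : Fin.last (k + 2) ≠ 0)
    rw [Fintype.card_fin, show (k + 3) * (k + 3) - (k + 3) = (k + 3) * (k + 2) by
      rw [Nat.mul_succ]; omega] at this
    rw [eq_div_iff (by positivity)]
    exact_mod_cast this
  calc catRule (k + 3) hn (skT (k + 3)) 0 ≤ #(A \ B) / (k + 3).factorial :=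
        catRule_le_card_div hn fun π h => by simpa [A, B] using skT_catWinner_zero hn h
    _ = ((#A : ℝ) - #B) / (k + 3).factorial := by
        rw [card_sdiff_of_subset hBA, Nat.cast_sub (card_le_card hBA)]
    _ = 1 / 2 - 1 / (((k : ℝ) + 3) * ((k : ℝ) + 2)) := by
        rw [hA, hB]
        field_simp

end SupermanKryptonite

/-- The randomized voting caterpillar rule on n players is not 2-SNM-α for any
α < 1/2 - (n-2)/(n(n-1)). -/
theorem stmt_11 (n : ℕ) (hn : 3 ≤ n) (α : ℝ)
    (hsnm : SNM2 (catRule n (by omega)) α) :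
    1/2 - ((n:ℝ) - 2)/((n:ℝ) * ((n:ℝ) - 1)) ≤ α := by
  obtain ⟨k, rfl⟩ : ∃ k, n = k + 3 := ⟨n - 3, by omega⟩
  have hpos : 0 < k + 3 := by omega
  have hT : IsTournament (skT (k + 3)) := skT_isTournament (by omega)
  have hne : (0 : Fin (k + 3)) ≠ Fin.last (k + 2) := Fin.last_pos.ne
  have hT' := flipTo_isTournament hT hne
  have hswing := hsnm _ _ hT hT' 0 (Fin.last (k + 2)) hne pairAdjacent_flipTo
  rw [catRule_eq_one_of_condorcetWinner hpos hT'
    (condorcetWinner_flipTo fun _ h0 hlast => skT_zero_eq_true h0 hlast)] at hswing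
  have hthrown := catRule_nonneg hpos (flipTo 0 (Fin.last (k + 2)) (skT (k + 3))) (Fin.last (k + 2))
  have hzero := catRule_skT_zero_le hpos
  have hlast := catRule_skT_last_le hpos
  have hbound : 1 - ((1 / 2 - 1 / (((k : ℝ) + 3) * ((k : ℝ) + 2))) + 1 / ((k : ℝ) + 3)) =
      1 / 2 - ((k : ℝ) + 3 - 2) / (((k : ℝ) + 3) * ((k : ℝ) + 2)) := by
    field_simp
    ring
  push_cast
  rw [show (k : ℝ) + 3 - 1 = k + 2 by ring, ← hbound]
  linarith
end
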